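/- Let U ⊆ ℝ^(n+2) be open, (ξ, N) a null frame on U, and Z : U → ℝ^(n+2) a differentiable closed conformal field with factor φ : U → ℝ. Let p ∈ U and assume that A*_ξ(p) and A_N(p) are symmetric on screen vectors. Then for every screen vector v at p: the derivative of q ↦ η(Z q, ξ q) * η(Z q, N q) at p in the direction v equals -η(v, A_{Z⊥}(p)(Z*(p))). (Flat-Minkowski-ambient form of the paper's lemma relating the screen derivative of the product of the null components of a closed conformal field to the operator A_{Z⊥} applied to its screen part.) -/

import Mathlib

/-!
Decompose `Z = Z* + η(Z,N) ξ + η(Z,ξ) N`. Along a screen vector `v` the conformal term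
`φ η(v, ξ)` vanishes, so `D_v η(Z,ξ) = η(Z, D_v ξ)`. Pairing the screen vector `Z*` with
`D_v ξ` is pairing it with `-A*_ξ v`, which the symmetry of `A*_ξ` turns into
`-η(v, A*_ξ Z*)`, and `η(ξ, D_v ξ) = 0` because `ξ` is null; likewise for `N` and `A_N`. In the product rule the two
leftover terms combine to `η(Z,ξ) η(Z,N) D_v η(ξ,N)`, which vanishes since `η(ξ,N) = 1`.
-/

open scoped BigOperators

noncomputable section

/-- Euclidean space `ℝ^m`. -/
abbrev E (m : ℕ) : Type := EuclideanSpace ℝ (Fin m)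

/-- The Minkowski bilinear form `η(x,y) = -(x 0)(y 0) + ∑_{i≥1} (x i)(y i)` on `ℝ^(n+2)`. -/
def eta {n : ℕ} (x y : E (n + 2)) : ℝ :=
  (∑ i, x i * y i) - 2 * (x 0 * y 0)

/-- Screen projection `P_p(w) = w - η(w,N)ξ - η(w,ξ)N` determined by the null frame at a point. -/
def sproj {n : ℕ} (xi N w : E (n + 2)) : E (n + 2) :=
  w - eta w N • xi - eta w xi • N

/-- Screen shape operator `A*_ξ(p)(v) = -P_p(D_v ξ (p))`. -/
def Astar {n : ℕ} (xi N : E (n + 2) → E (n + 2)) (p v : E (n + 2)) : E (n + 2) :=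
  -sproj (xi p) (N p) (fderiv ℝ xi p v)

/-- Shape operator `A_N(p)(v) = -P_p(D_v N (p))`. -/
def AN {n : ℕ} (xi N : E (n + 2) → E (n + 2)) (p v : E (n + 2)) : E (n + 2) :=
  -sproj (xi p) (N p) (fderiv ℝ N p v)

/-- Transversal one-form `τ_p(v) = η(D_v N(p), ξ p)`. -/
def tau {n : ℕ} (xi N : E (n + 2) → E (n + 2)) (p v : E (n + 2)) : ℝ :=
  eta (fderiv ℝ N p v) (xi p)

/-- Screen part `Z*(p) = P_p(Z p)` of a vector field. -/
def Zstar {n : ℕ} (xi N Z : E (n + 2) → E (n + 2)) (p : E (n + 2)) : E (n + 2) :=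
  sproj (xi p) (N p) (Z p)

/-- `A_{Z⊥}(p)(v) = η(Z p, N p) • A*_ξ(p)(v) + η(Z p, ξ p) • A_N(p)(v)`. -/
def AZperp {n : ℕ} (xi N Z : E (n + 2) → E (n + 2)) (p v : E (n + 2)) : E (n + 2) :=
  eta (Z p) (N p) • Astar xi N p v + eta (Z p) (xi p) • AN xi N p v

open Filter Topology

section Minkowski

/-- `eta` as a continuous bilinear map, so that `ContinuousLinearMap.fderiv_of_bilinear` gives
its product rule. -/
def etaL (n : ℕ) : E (n + 2) →L[ℝ] E (n + 2) →L[ℝ] ℝ :=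
  innerSL ℝ - (2 : ℝ) • (EuclideanSpace.proj 0).smulRight (EuclideanSpace.proj 0)

variable {n : ℕ}

@[simp]
lemma etaL_apply (x y : E (n + 2)) : etaL n x y = eta x y := by
  rw [etaL, sub_apply, sub_apply, innerSL_apply_apply]
  simp [eta, PiLp.inner_apply, mul_comm]

lemma eta_comm (x y : E (n + 2)) : eta x y = eta y x := by
  simp only [eta, mul_comm]

lemma eta_sub_left (x x' y : E (n + 2)) : eta (x - x') y = eta x y - eta x' y := by
  simp only [← etaL_apply, map_sub, sub_apply]

lemma eta_smul_left (c : ℝ) (x y : E (n + 2)) : eta (c • x) y = c * eta x y := by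
  simp only [← etaL_apply, map_smul, smul_apply, smul_eq_mul]

lemma eta_neg_left (x y : E (n + 2)) : eta (-x) y = -eta x y := by
  simp only [← etaL_apply, map_neg, neg_apply]

lemma eta_add_right (x y y' : E (n + 2)) : eta x (y + y') = eta x y + eta x y' := by
  simp only [← etaL_apply, map_add]

lemma eta_sub_right (x y y' : E (n + 2)) : eta x (y - y') = eta x y - eta x y' := by
  simp only [← etaL_apply, map_sub]

lemma eta_smul_right (c : ℝ) (x y : E (n + 2)) : eta x (c • y) = c * eta x y := by
  simp only [← etaL_apply, map_smul, smul_eq_mul]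

end Minkowski

section Screen

variable {n : ℕ} {xi N : E (n + 2)}

lemma eta_sproj_xi (hξξ : eta xi xi = 0) (hξN : eta xi N = 1) (w : E (n + 2)) :
    eta (sproj xi N w) xi = 0 := by
  simp only [sproj, eta_sub_left, eta_smul_left, hξξ, eta_comm N xi, hξN]
  ring

lemma eta_sproj_N (hNN : eta N N = 0) (hξN : eta xi N = 1) (w : E (n + 2)) :
    eta (sproj xi N w) N = 0 := by
  simp only [sproj, eta_sub_left, eta_smul_left, hNN, hξN]
  ring

lemma eta_sproj_right_of_screen {w : E (n + 2)} (hwξ : eta w xi = 0) (hwN : eta w N = 0)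
    (u : E (n + 2)) : eta w (sproj xi N u) = eta w u := by
  simp only [sproj, eta_sub_right, eta_smul_right, hwξ, hwN]
  ring

lemma eta_neg_sproj_left_of_screen {w : E (n + 2)} (hwξ : eta w xi = 0) (hwN : eta w N = 0)
    (u : E (n + 2)) : eta (-sproj xi N u) w = -eta w u := by
  rw [eta_neg_left, eta_comm, eta_sproj_right_of_screen hwξ hwN]

end Screen

lemma eta_eq_eta_Zstar_add {n : ℕ} (xi N Z : E (n + 2) → E (n + 2)) (p u : E (n + 2)) :
    eta (Z p) u =
      eta (Zstar xi N Z p) u + eta (Z p) (N p) * eta (xi p) u + eta (Z p) (xi p) * eta (N p) u := by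
  simp only [Zstar, sproj, eta_sub_left, eta_smul_left]
  ring

section Derivative

variable {n : ℕ} {X : Type*} [NormedAddCommGroup X] [NormedSpace ℝ X]
  {F G : X → E (n + 2)} {p : X}

lemma differentiableAt_eta (hF : DifferentiableAt ℝ F p) (hG : DifferentiableAt ℝ G p) :
    DifferentiableAt ℝ (fun q => eta (F q) (G q)) p := by
  simp only [← etaL_apply]
  fun_prop

lemma fderiv_eta_apply (hF : DifferentiableAt ℝ F p) (hG : DifferentiableAt ℝ G p) (v : X) :
    fderiv ℝ (fun q => eta (F q) (G q)) p v =
      eta (fderiv ℝ F p v) (G p) + eta (F p) (fderiv ℝ G p v) := by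
  simp only [← etaL_apply]
  rw [(etaL n).fderiv_of_bilinear hF hG]
  simp [add_comm]

lemma eta_fderiv_add_eta_fderiv_eq_zero (hF : DifferentiableAt ℝ F p)
    (hG : DifferentiableAt ℝ G p) {c : ℝ}
    (hc : (fun q => eta (F q) (G q)) =ᶠ[𝓝 p] fun _ => c) (v : X) :
    eta (fderiv ℝ F p v) (G p) + eta (F p) (fderiv ℝ G p v) = 0 := by
  rw [← fderiv_eta_apply hF hG, hc.fderiv_eq, fderiv_const_apply, zero_apply]

lemma eta_fderiv_eq_zero_of_eventually_eq_const (hF : DifferentiableAt ℝ F p) {c : ℝ}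
    (hc : (fun q => eta (F q) (F q)) =ᶠ[𝓝 p] fun _ => c) (v : X) :
    eta (F p) (fderiv ℝ F p v) = 0 := by
  have h := eta_fderiv_add_eta_fderiv_eq_zero hF hF hc v
  rw [eta_comm] at h
  linarith

end Derivative

lemma fderiv_eta_apply_of_fderiv_eq_smul_id {n : ℕ} {Z Y : E (n + 2) → E (n + 2)}
    {p v : E (n + 2)} {c : ℝ} (hZ : DifferentiableAt ℝ Z p) (hY : DifferentiableAt ℝ Y p)
    (hCC : fderiv ℝ Z p = c • ContinuousLinearMap.id ℝ (E (n + 2))) (hv : eta v (Y p) = 0) :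
    fderiv ℝ (fun q => eta (Z q) (Y q)) p v = eta (Z p) (fderiv ℝ Y p v) := by
  rw [fderiv_eta_apply hZ hY, hCC, smul_apply, ContinuousLinearMap.id_apply, eta_smul_left, hv,
    mul_zero, zero_add]

section ShapeOperator

variable {n : ℕ} {xi N : E (n + 2) → E (n + 2)} {p w : E (n + 2)}

lemma eta_Astar_left_of_screen (hwξ : eta w (xi p) = 0) (hwN : eta w (N p) = 0)
    (v : E (n + 2)) :
    eta (Astar xi N p v) w = -eta w (fderiv ℝ xi p v) :=
  eta_neg_sproj_left_of_screen hwξ hwN _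

lemma eta_AN_left_of_screen (hwξ : eta w (xi p) = 0) (hwN : eta w (N p) = 0)
    (v : E (n + 2)) :
    eta (AN xi N p v) w = -eta w (fderiv ℝ N p v) :=
  eta_neg_sproj_left_of_screen hwξ hwN _

end ShapeOperator

/-- For a closed conformal field `Z` and an integrable (symmetric) screen,
the screen derivative of `η(Z,ξ)η(Z,N)` equals `-η(v, A_{Z⊥}(Z*))`
(flat Minkowski ambient form of Lemma on the screen derivative). -/
theorem screen_derivative_product_null_components {n : ℕ}
    (U : Set (E (n + 2))) (hU : IsOpen U)
    (ξ N Z : E (n + 2) → E (n + 2)) (φ : E (n + 2) → ℝ) (p : E (n + 2)) (hp : p ∈ U)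
    (hξd : ∀ q ∈ U, DifferentiableAt ℝ ξ q)
    (hNd : ∀ q ∈ U, DifferentiableAt ℝ N q)
    (hZd : ∀ q ∈ U, DifferentiableAt ℝ Z q)
    (hξξ : ∀ q ∈ U, eta (ξ q) (ξ q) = 0)
    (hNN : ∀ q ∈ U, eta (N q) (N q) = 0)
    (hξN : ∀ q ∈ U, eta (ξ q) (N q) = 1)
    (hCC : ∀ q ∈ U, fderiv ℝ Z q = φ q • ContinuousLinearMap.id ℝ (E (n + 2)))
    (hAsym : ∀ v w : E (n + 2),
      eta v (ξ p) = 0 → eta v (N p) = 0 → eta w (ξ p) = 0 → eta w (N p) = 0 →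
      eta (Astar ξ N p v) w = eta v (Astar ξ N p w))
    (hANsym : ∀ v w : E (n + 2),
      eta v (ξ p) = 0 → eta v (N p) = 0 → eta w (ξ p) = 0 → eta w (N p) = 0 →
      eta (AN ξ N p v) w = eta v (AN ξ N p w)) :
    ∀ v : E (n + 2), eta v (ξ p) = 0 → eta v (N p) = 0 →
      fderiv ℝ (fun q => eta (Z q) (ξ q) * eta (Z q) (N q)) p v =
        -eta v (AZperp ξ N Z p (Zstar ξ N Z p)) := by
  intro v hvξ hvN
  have hξp := hξd p hp
  have hNp := hNd p hp
  have hZp := hZd p hp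
  have hUp : U ∈ 𝓝 p := hU.mem_nhds hp
  set W := Zstar ξ N Z p
  have hWξ : eta W (ξ p) = 0 := eta_sproj_xi (hξξ p hp) (hξN p hp) _
  have hWN : eta W (N p) = 0 := eta_sproj_N (hNN p hp) (hξN p hp) _
  have dξξ := eta_fderiv_eq_zero_of_eventually_eq_const hξp (eventually_of_mem hUp hξξ) v
  have dNN := eta_fderiv_eq_zero_of_eventually_eq_const hNp (eventually_of_mem hUp hNN) v
  have dξN := eta_fderiv_add_eta_fderiv_eq_zero hξp hNp (eventually_of_mem hUp hξN) v
  have dZξ : fderiv ℝ (fun q => eta (Z q) (ξ q)) p v =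
      -eta v (Astar ξ N p W) + eta (Z p) (ξ p) * eta (N p) (fderiv ℝ ξ p v) := by
    rw [fderiv_eta_apply_of_fderiv_eq_smul_id hZp hξp (hCC p hp) hvξ,
      eta_eq_eta_Zstar_add ξ N Z, ← hAsym v W hvξ hvN hWξ hWN,
      eta_Astar_left_of_screen hWξ hWN, dξξ]
    ring
  have dZN : fderiv ℝ (fun q => eta (Z q) (N q)) p v =
      -eta v (AN ξ N p W) + eta (Z p) (N p) * eta (ξ p) (fderiv ℝ N p v) := by
    rw [fderiv_eta_apply_of_fderiv_eq_smul_id hZp hNp (hCC p hp) hvN,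
      eta_eq_eta_Zstar_add ξ N Z, ← hANsym v W hvξ hvN hWξ hWN, eta_AN_left_of_screen hWξ hWN,
      dNN]
    ring
  rw [fderiv_fun_mul (differentiableAt_eta hZp hξp) (differentiableAt_eta hZp hNp)]
  simp only [add_apply, smul_apply, smul_eq_mul, dZξ, dZN, AZperp, eta_add_right,
    eta_smul_right]
  linear_combination
    eta (Z p) (ξ p) * eta (Z p) (N p) * (dξN + eta_comm (N p) (fderiv ℝ ξ p v))

end
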